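/- arXiv:1110.1066 — 7 statements merged into one kernel-verified Lean document; each statement's English description precedes it below -/
import Mathlib

section
/- All idempotents in a Reedy category are split: if ε: c → c satisfies εε = ε, then there exist σ: d → c in C⁺ and ρ: c → d in C⁻ with ρσ = 1_d and σρ = ε. -/
open CategoryTheory CategoryTheory.Limits Opposite

universe v u

/-- A Reedy category structure on a category `C`: wide subcategories `plus` (direct) and
`minus` (inverse) together with a degree function, satisfying unique factorization and
the degree conditions. -/
structure ReedyStruct (C : Type u) [Category.{v} C] where
  plus : MorphismProperty C
  minus : MorphismProperty C
  deg : C → ℕ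
  plus_id : ∀ c : C, plus (𝟙 c)
  minus_id : ∀ c : C, minus (𝟙 c)
  plus_comp : ∀ {a b c : C} (f : a ⟶ b) (g : b ⟶ c), plus f → plus g → plus (f ≫ g)
  minus_comp : ∀ {a b c : C} (f : a ⟶ b) (g : b ⟶ c), minus f → minus g → minus (f ≫ g)
  fact_exists : ∀ {a b : C} (f : a ⟶ b), ∃ (e : C) (g : a ⟶ e) (h : e ⟶ b),
    minus g ∧ plus h ∧ g ≫ h = f
  fact_unique : ∀ {a b e e' : C} (g : a ⟶ e) (h : e ⟶ b) (g' : a ⟶ e') (h' : e' ⟶ b),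
    minus g → plus h → minus g' → plus h' → g ≫ h = g' ≫ h' →
    ∃ w : e = e', g ≫ eqToHom w = g' ∧ eqToHom w ≫ h' = h
  plus_deg : ∀ {a b : C} (f : a ⟶ b), plus f → deg a ≤ deg b
  minus_deg : ∀ {a b : C} (f : a ⟶ b), minus f → deg b ≤ deg a
  plus_deg_eq : ∀ {a b : C} (f : a ⟶ b), plus f → deg a = deg b → ∃ w : a = b, f = eqToHom w
  minus_deg_eq : ∀ {a b : C} (f : a ⟶ b), minus f → deg a = deg b → ∃ w : a = b, f = eqToHom w

/-!
Factor `ε = ρ ≫ σ` with `ρ : c ⟶ d` in `C⁻` and `σ : d ⟶ c` in `C⁺`, and factor `σ ≫ ρ` again as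
`ρ' ≫ σ'` through some `e`. Idempotence makes `(ρ ≫ ρ') ≫ (σ' ≫ σ)` a second Reedy factorization
of `ε`, so uniqueness forces `e = d`. Then `ρ'` and `σ'` preserve degree and are identities,
whence `σ ≫ ρ = 𝟙 d`.
-/

namespace ReedyStruct

variable {C : Type u} [Category.{v} C] (R : ReedyStruct C)

theorem comp_eq_id_of_deg_eq {a e : C} (g : a ⟶ e) (h : e ⟶ a) (hg : R.minus g) (hh : R.plus h)
    (hdeg : R.deg a = R.deg e) : g ≫ h = 𝟙 a := by
  obtain ⟨rfl, rfl⟩ := R.minus_deg_eq g hg hdeg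
  obtain ⟨_, rfl⟩ := R.plus_deg_eq h hh rfl
  simp

theorem plus_comp_minus_eq_id_of_idempotent {c d : C} (ρ : c ⟶ d) (σ : d ⟶ c)
    (hρ : R.minus ρ) (hσ : R.plus σ) (hidem : (ρ ≫ σ) ≫ (ρ ≫ σ) = ρ ≫ σ) :
    σ ≫ ρ = 𝟙 d := by
  obtain ⟨e, ρ', σ', hρ', hσ', hfac⟩ := R.fact_exists (σ ≫ ρ)
  have hrefactor : (ρ ≫ ρ') ≫ (σ' ≫ σ) = ρ ≫ σ := by
    calc (ρ ≫ ρ') ≫ (σ' ≫ σ) = ρ ≫ (ρ' ≫ σ') ≫ σ := by simp only [Category.assoc]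
      _ = (ρ ≫ σ) ≫ (ρ ≫ σ) := by rw [hfac]; simp only [Category.assoc]
      _ = ρ ≫ σ := hidem
  obtain ⟨rfl, -⟩ := R.fact_unique (ρ ≫ ρ') (σ' ≫ σ) ρ σ
    (R.minus_comp _ _ hρ hρ') (R.plus_comp _ _ hσ' hσ) hρ hσ hrefactor
  rw [← hfac]
  exact R.comp_eq_id_of_deg_eq ρ' σ' hρ' hσ' rfl

end ReedyStruct

/-- All idempotents in a Reedy category are split: if `ε : c ⟶ c` satisfies `ε ≫ ε = ε`, then
there exist `ρ : c ⟶ d` in `C⁻` and `σ : d ⟶ c` in `C⁺` with `σ ≫ ρ = 𝟙 d` (i.e. `ρσ = 1_d`)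
and `ρ ≫ σ = ε` (i.e. `σρ = ε`). -/
theorem reedy_idempotents_split {C : Type u} [Category.{v} C] (R : ReedyStruct C)
    {c : C} (ε : c ⟶ c) (hε : ε ≫ ε = ε) :
    ∃ (d : C) (ρ : c ⟶ d) (σ : d ⟶ c),
      R.minus ρ ∧ R.plus σ ∧ σ ≫ ρ = 𝟙 d ∧ ρ ≫ σ = ε := by
  obtain ⟨d, ρ, σ, hρ, hσ, rfl⟩ := R.fact_exists ε
  exact ⟨d, ρ, σ, hρ, hσ, R.plus_comp_minus_eq_id_of_idempotent ρ σ hρ hσ hε, rfl⟩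
end

section
/- In a Reedy category, every retract of a representable presheaf is representable: if X is a retract of Fc in Psh(C), then X ≅ Fd for some object d of C. -/
/-!
A Reedy category is idempotent complete: if `e = g ≫ h` is the (inverse, direct) factorization
of an idempotent `e : c ⟶ c` through `d`, factor `h ≫ g = g' ≫ h'`; then `e = e ≫ e` has the
second factorization `(g ≫ g') ≫ (h' ≫ h)`, so by uniqueness `g'` and `h'` are endomorphisms
of `d` in the inverse resp. direct part, hence identities, and `h ≫ g = 𝟙 d` splits `e`.
The essential image of a fully faithful functor out of an idempotent complete category is
closed under retracts, since the idempotent of a retract lifts and splits in the source.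
-/

open CategoryTheory CategoryTheory.Limits Opposite

universe v u

namespace CategoryTheory

variable {C : Type*} [Category C] {D : Type*} [Category D]

def Retract.isoOfIdempotentEq {X Y Z : C} (h : Retract X Z) (h' : Retract Y Z)
    (w : h.r ≫ h.i = h'.r ≫ h'.i) : X ≅ Y where
  hom := h.i ≫ h'.r
  inv := h'.i ≫ h.r
  hom_inv_id := by
    rw [Category.assoc, ← Category.assoc h'.r, ← w]
    simp
  inv_hom_id := by
    rw [Category.assoc, ← Category.assoc h.r, w]
    simp

instance Functor.essImage_isStableUnderRetracts [IsIdempotentComplete C] (F : C ⥤ D)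
    [F.Full] [F.Faithful] : F.essImage.IsStableUnderRetracts where
  of_retract {X Y} h := by
    rintro ⟨c, ⟨e⟩⟩
    let h₁ : Retract X (F.obj c) := h.trans (Retract.ofIso e.symm)
    have hp : F.preimage (h₁.r ≫ h₁.i) ≫ F.preimage (h₁.r ≫ h₁.i) = F.preimage (h₁.r ≫ h₁.i) :=
      F.map_injective (by simp)
    obtain ⟨d, s, t, hst, hts⟩ := IsIdempotentComplete.idempotents_split c _ hp
    let h₂ : Retract (F.obj d) (F.obj c) := (Retract.mk s t hst).map F
    have w : h₂.r ≫ h₂.i = h₁.r ≫ h₁.i := by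
      simp only [h₂, Retract.map_r, Retract.map_i, ← F.map_comp, hts, F.map_preimage]
    exact ⟨d, ⟨(h₁.isoOfIdempotentEq h₂ w.symm).symm⟩⟩

end CategoryTheory

namespace ReedyStruct

variable {C : Type u} [Category.{v} C] (R : ReedyStruct C)

theorem minus_eq_id {a : C} {f : a ⟶ a} (hf : R.minus f) : f = 𝟙 a := by
  obtain ⟨_, rfl⟩ := R.minus_deg_eq f hf rfl
  rfl

theorem plus_eq_id {a : C} {f : a ⟶ a} (hf : R.plus f) : f = 𝟙 a := by
  obtain ⟨_, rfl⟩ := R.plus_deg_eq f hf rfl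
  rfl

theorem comp_eq_id_of_idempotent {c d : C} {g : c ⟶ d} {h : d ⟶ c} (hg : R.minus g)
    (hh : R.plus h) (he : (g ≫ h) ≫ (g ≫ h) = g ≫ h) : h ≫ g = 𝟙 d := by
  obtain ⟨d', g', h', hg', hh', hgh'⟩ := R.fact_exists (h ≫ g)
  have hfact : (g ≫ g') ≫ (h' ≫ h) = g ≫ h := by
    simpa only [Category.assoc, reassoc_of% hgh'] using he
  obtain ⟨rfl, -, -⟩ := R.fact_unique _ _ g h (R.minus_comp _ _ hg hg') (R.plus_comp _ _ hh' hh)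
    hg hh hfact
  rw [← hgh', R.minus_eq_id hg', R.plus_eq_id hh', Category.comp_id]

end ReedyStruct

theorem ReedyStruct.isIdempotentComplete {C : Type u} [Category.{v} C] (R : ReedyStruct C) :
    IsIdempotentComplete C where
  idempotents_split c p hp := by
    obtain ⟨d, g, h, hg, hh, rfl⟩ := R.fact_exists p
    exact ⟨d, h, g, R.comp_eq_id_of_idempotent hg hh hp, rfl⟩

/-- In a Reedy category, every retract of a representable presheaf is representable:
if `X` is a retract of `Fc` in `Psh(C)`, then `X ≅ Fd` for some object `d` of `C`. -/
theorem reedy_retract_of_representable {C : Type u} [Category.{v} C] (R : ReedyStruct C)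
    (c : C) (X : Cᵒᵖ ⥤ Type v) (i : X ⟶ yoneda.obj c) (r : yoneda.obj c ⟶ X)
    (hri : i ≫ r = 𝟙 X) : ∃ d : C, Nonempty (X ≅ yoneda.obj d) := by
  have := R.isIdempotentComplete
  obtain ⟨d, ⟨e⟩⟩ := yoneda.essImage.prop_of_retract ⟨i, r, hri⟩ (yoneda.obj_mem_essImage c)
  exact ⟨d, ⟨e.symm⟩⟩
end

section
/- Every multi-Reedy category is a Reedy category, with inverse category C⁻, direct category C⁺ = C⁺(*) ∩ C, and the same degree function. -/
open CategoryTheory CategoryTheory.Limits Opposite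

universe v u

/-- A multi-Reedy category structure on `C`: a wide subcategory `minus`, a wide
sub-multicategory `plusM` of the symmetric multicategory `C(*)` (whose multimorphisms
`c → d₁,…,dₘ` are finite tuples of morphisms `c ⟶ dᵢ` of `C`), and a degree function,
satisfying unique factorization of multimorphisms as a map of `minus` followed by a
multimorphism of `plusM`, together with the degree conditions. -/
structure MultiReedyStruct (C : Type u) [Category.{v} C] where
  minus : MorphismProperty C
  plusM : ∀ {c : C} {ι : Type} [Fintype ι] (d : ι → C), (∀ i, c ⟶ d i) → Prop
  deg : C → ℕ
  minus_id : ∀ c : C, minus (𝟙 c)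
  minus_comp : ∀ {a b c : C} (f : a ⟶ b) (g : b ⟶ c), minus f → minus g → minus (f ≫ g)
  plusM_id : ∀ c : C, plusM (fun _ : PUnit => c) (fun _ => 𝟙 c)
  plusM_reindex : ∀ {c : C} {ι ι' : Type} [Fintype ι] [Fintype ι'] (e : ι' ≃ ι)
    (d : ι → C) (f : ∀ i, c ⟶ d i), plusM d f → plusM (fun i => d (e i)) (fun i => f (e i))
  plusM_comp : ∀ {c : C} {ι : Type} [Fintype ι] {d : ι → C} (f : ∀ i, c ⟶ d i)
    {κ : ι → Type} [∀ i, Fintype (κ i)] {e : ∀ i, κ i → C} (g : ∀ i j, d i ⟶ e i j),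
    plusM d f → (∀ i, plusM (e i) (g i)) →
    plusM (ι := Σ i, κ i) (fun p => e p.1 p.2) (fun p => f p.1 ≫ g p.1 p.2)
  fact_exists : ∀ {c : C} {ι : Type} [Fintype ι] (d : ι → C) (f : ∀ i, c ⟶ d i),
    ∃ (x : C) (g : c ⟶ x) (h : ∀ i, x ⟶ d i), minus g ∧ plusM d h ∧ ∀ i, g ≫ h i = f i
  fact_unique : ∀ {c : C} {ι : Type} [Fintype ι] (d : ι → C) {x x' : C}
    (g : c ⟶ x) (h : ∀ i, x ⟶ d i) (g' : c ⟶ x') (h' : ∀ i, x' ⟶ d i),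
    minus g → plusM d h → minus g' → plusM d h' → (∀ i, g ≫ h i = g' ≫ h' i) →
    ∃ w : x = x', g ≫ eqToHom w = g' ∧ ∀ i, eqToHom w ≫ h' i = h i
  plusM_deg : ∀ {c : C} {ι : Type} [Fintype ι] (d : ι → C) (f : ∀ i, c ⟶ d i),
    plusM d f → deg c ≤ ∑ i, deg (d i)
  plusOne_deg_eq : ∀ {a b : C} (f : a ⟶ b),
    plusM (fun _ : PUnit => b) (fun _ => f) → deg a = deg b → ∃ w : a = b, f = eqToHom w
  minus_deg : ∀ {a b : C} (f : a ⟶ b), minus f → deg b ≤ deg a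
  minus_deg_eq : ∀ {a b : C} (f : a ⟶ b), minus f → deg a = deg b → ∃ w : a = b, f = eqToHom w

/-- The direct subcategory `C⁺ = C⁺(*) ∩ C` of a multi-Reedy category: the valence-one
multimorphisms of `C⁺(*)`. -/
def MultiReedyStruct.plusOne {C : Type u} [Category.{v} C] (M : MultiReedyStruct C) :
    MorphismProperty C :=
  fun _ b f => M.plusM (fun _ : PUnit => b) (fun _ => f)

namespace MultiReedyStruct

variable {C : Type u} [Category.{v} C] (M : MultiReedyStruct C)

/-- Composing in the multicategory yields a multimorphism indexed by `Σ _ : PUnit, PUnit`,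
which is reindexed back to `PUnit`. -/
theorem plusOne_comp {a b c : C} (f : a ⟶ b) (g : b ⟶ c) (hf : M.plusOne f)
    (hg : M.plusOne g) : M.plusOne (f ≫ g) :=
  M.plusM_reindex (Equiv.uniqueSigma fun _ : PUnit => PUnit).symm _ _
    (M.plusM_comp (d := fun _ : PUnit => b) (fun _ => f) (κ := fun _ => PUnit)
      (e := fun _ _ => c) (fun _ _ => g) hf fun _ => hg)

theorem deg_le_of_plusOne {a b : C} (f : a ⟶ b) (hf : M.plusOne f) : M.deg a ≤ M.deg b := by
  simpa using M.plusM_deg (fun _ : PUnit => b) (fun _ => f) hf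

theorem exists_minus_plusOne_fac {a b : C} (f : a ⟶ b) :
    ∃ (e : C) (g : a ⟶ e) (h : e ⟶ b), M.minus g ∧ M.plusOne h ∧ g ≫ h = f := by
  obtain ⟨e, g, h, hg, hh, hgh⟩ := M.fact_exists (fun _ : PUnit => b) (fun _ => f)
  exact ⟨e, g, h PUnit.unit, hg, hh, hgh PUnit.unit⟩

theorem minus_plusOne_fac_unique {a b e e' : C} (g : a ⟶ e) (h : e ⟶ b) (g' : a ⟶ e')
    (h' : e' ⟶ b) (hg : M.minus g) (hh : M.plusOne h) (hg' : M.minus g')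
    (hh' : M.plusOne h') (hgh : g ≫ h = g' ≫ h') :
    ∃ w : e = e', g ≫ eqToHom w = g' ∧ eqToHom w ≫ h' = h := by
  obtain ⟨w, hw, hw'⟩ := M.fact_unique (fun _ : PUnit => b) g (fun _ => h) g' (fun _ => h')
    hg hh hg' hh' fun _ => hgh
  exact ⟨w, hw, hw' PUnit.unit⟩

def toReedyStruct : ReedyStruct C where
  plus := M.plusOne
  minus := M.minus
  deg := M.deg
  plus_id := M.plusM_id
  minus_id := M.minus_id
  plus_comp := M.plusOne_comp
  minus_comp := M.minus_comp
  fact_exists := M.exists_minus_plusOne_fac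
  fact_unique := M.minus_plusOne_fac_unique
  plus_deg := M.deg_le_of_plusOne
  minus_deg := M.minus_deg
  plus_deg_eq := M.plusOne_deg_eq
  minus_deg_eq := M.minus_deg_eq

end MultiReedyStruct

/-- Every multi-Reedy category is a Reedy category, with inverse category `C⁻`, direct
category `C⁺ = C⁺(*) ∩ C`, and the same degree function. -/
theorem multiReedy_is_reedy {C : Type u} [Category.{v} C] (M : MultiReedyStruct C) :
    ∃ R : ReedyStruct C, R.minus = M.minus ∧ R.plus = M.plusOne ∧ R.deg = M.deg :=
  ⟨M.toReedyStruct, rfl, rfl, rfl⟩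
end

section
/- The category Δ with Δ⁻ the surjections, Δ⁺(*) the monomorphic families of maps (tuples (αₛ: [m] → [nₛ]) such that αₛβ = αₛβ' for all s implies β = β'), and deg([m]) = m, is a multi-Reedy category. -/
open CategoryTheory CategoryTheory.Limits Opposite

universe v u

/-!
For a family `fᵢ : [a] ⟶ [nᵢ]`, the image of `u ↦ (fᵢ u)ᵢ` in `∏ [nᵢ]` is a chain, so the map
`σ : [a] ⟶ [∑ nᵢ]`, `u ↦ ∑ fᵢ u`, has the same kernel as the family. Hence the family is jointly
monic iff `σ` is monic, which gives `a ≤ ∑ nᵢ`, and factoring `σ` as a surjection followed by an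
injection factors the family. Since surjections in `Δ` split, two such factorizations differ by a
map that is epi and mono, hence an identity.
-/

namespace CategoryTheory

variable {C : Type*} [Category C]

def JointlyMono {a : C} {ι : Type*} {d : ι → C} (f : ∀ i, a ⟶ d i) : Prop :=
  ∀ {k : C} (β β' : k ⟶ a), (∀ i, β ≫ f i = β' ≫ f i) → β = β'

theorem jointlyMono_punit_iff {a b : C} (f : a ⟶ b) :
    JointlyMono (fun _ : PUnit => f) ↔ Mono f :=
  ⟨fun hf => ⟨fun β β' h => hf β β' fun _ => h⟩,
    fun _ _ _ _ h => (cancel_mono f).1 (h PUnit.unit)⟩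

namespace JointlyMono

theorem comp_surjective {a : C} {ι ι' : Type*} {d : ι → C} {f : ∀ i, a ⟶ d i}
    (hf : JointlyMono f) {e : ι' → ι} (he : Function.Surjective e) :
    JointlyMono (fun i => f (e i)) := by
  intro k β β' h
  refine hf β β' fun i => ?_
  obtain ⟨i', rfl⟩ := he i
  exact h i'

theorem sigma {a : C} {ι : Type*} {d : ι → C} {f : ∀ i, a ⟶ d i} (hf : JointlyMono f)
    {κ : ι → Type*} {e : ∀ i, κ i → C} {g : ∀ i j, d i ⟶ e i j}
    (hg : ∀ i, JointlyMono (g i)) :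
    JointlyMono (fun p : Σ i, κ i => f p.1 ≫ g p.1 p.2) :=
  fun β β' h => hf β β' fun i =>
    hg i (β ≫ f i) (β' ≫ f i) fun j => by simpa only [Category.assoc] using h ⟨i, j⟩

theorem mono_of_comp {a b : C} {ι : Type*} {d : ι → C} {φ : a ⟶ b} {h : ∀ i, b ⟶ d i}
    (hφh : JointlyMono (fun i => φ ≫ h i)) : Mono φ :=
  ⟨fun β β' hβ => hφh β β' fun i => by rw [reassoc_of% hβ]⟩

end JointlyMono

theorem exists_isIso_of_epi_comp_jointlyMono [Balanced C] [SplitEpiCategory C] {c x x' : C}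
    {ι : Type*} {d : ι → C} (g : c ⟶ x) [Epi g] (g' : c ⟶ x') [Epi g'] {h : ∀ i, x ⟶ d i}
    {h' : ∀ i, x' ⟶ d i} (hh : JointlyMono h) (hh' : JointlyMono h')
    (w : ∀ i, g ≫ h i = g' ≫ h' i) :
    ∃ φ : x ⟶ x', IsIso φ ∧ g ≫ φ = g' ∧ ∀ i, φ ≫ h' i = h i := by
  have := isSplitEpi_of_epi g
  have hφh : ∀ i, (section_ g ≫ g') ≫ h' i = h i := fun i => by
    rw [Category.assoc, ← w, IsSplitEpi.id_assoc]
  have hgφ : g ≫ section_ g ≫ g' = g' :=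
    hh' _ _ fun i => by rw [Category.assoc, hφh, w]
  have : Epi (section_ g ≫ g') := epi_of_epi_fac hgφ
  have : Mono (section_ g ≫ g') := JointlyMono.mono_of_comp (h := h') (by simpa only [hφh])
  exact ⟨_, isIso_of_mono_of_epi _, hgφ, hφh⟩

end CategoryTheory

namespace SimplexCategory

open CategoryTheory

theorem exists_eq_eqToHom_of_isIso {x y : SimplexCategory} (f : x ⟶ y) [IsIso f] :
    ∃ w : x = y, f = eqToHom w := by
  obtain rfl : x = y := SimplexCategory.ext (len_eq_of_isIso f)
  exact ⟨rfl, eq_id_of_isIso f⟩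

variable {a : SimplexCategory} {ι : Type} [Fintype ι] {d : ι → SimplexCategory}

def sumMap (f : ∀ i, a ⟶ d i) : a ⟶ mk (∑ i, (d i).len) :=
  Hom.mk
    { toFun := fun u => ⟨∑ i, ((f i).toOrderHom u : ℕ),
        Nat.lt_succ_of_le (Finset.sum_le_sum fun i _ => Nat.le_of_lt_succ ((f i).toOrderHom u).2)⟩
      monotone' := fun _ _ huv =>
        Fin.mk_le_mk.2 (Finset.sum_le_sum fun i _ => (f i).toOrderHom.monotone huv) }

theorem sumMap_apply_val (f : ∀ i, a ⟶ d i) (u : Fin (a.len + 1)) :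
    ((sumMap f).toOrderHom u : ℕ) = ∑ i, ((f i).toOrderHom u : ℕ) :=
  rfl

theorem sumMap_apply_eq_iff (f : ∀ i, a ⟶ d i) {u v : Fin (a.len + 1)} :
    (sumMap f).toOrderHom u = (sumMap f).toOrderHom v ↔
      ∀ i, (f i).toOrderHom u = (f i).toOrderHom v := by
  suffices key : ∀ {u v}, u ≤ v → (sumMap f).toOrderHom u = (sumMap f).toOrderHom v →
      ∀ i, (f i).toOrderHom u = (f i).toOrderHom v by
    refine ⟨fun huv => (le_total u v).elim (key · huv) fun hvu i => (key hvu huv.symm i).symm,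
      fun huv => Fin.ext ?_⟩
    simp only [sumMap_apply_val, huv]
  intro u v huv hs i
  have hle : ∀ i ∈ Finset.univ, ((f i).toOrderHom u : ℕ) ≤ (f i).toOrderHom v :=
    fun i _ => (f i).toOrderHom.monotone huv
  have hsum := congrArg Fin.val hs
  rw [sumMap_apply_val, sumMap_apply_val, Finset.sum_eq_sum_iff_of_le hle] at hsum
  exact Fin.ext (hsum i (Finset.mem_univ i))

theorem comp_sumMap_eq_iff (f : ∀ i, a ⟶ d i) {k : SimplexCategory} (β β' : k ⟶ a) :
    β ≫ sumMap f = β' ≫ sumMap f ↔ ∀ i, β ≫ f i = β' ≫ f i := by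
  simp only [Hom.ext_iff, OrderHom.ext_iff, funext_iff, comp_toOrderHom, OrderHom.comp_coe,
    Function.comp_apply, sumMap_apply_eq_iff]
  exact forall_comm

theorem comp_sumMap {k : SimplexCategory} (β : k ⟶ a) (f : ∀ i, a ⟶ d i) :
    sumMap (fun i => β ≫ f i) = β ≫ sumMap f := by
  ext : 3
  rfl

theorem jointlyMono_iff_mono_sumMap (f : ∀ i, a ⟶ d i) : JointlyMono f ↔ Mono (sumMap f) :=
  ⟨fun hf => ⟨fun β β' h => hf β β' ((comp_sumMap_eq_iff f β β').1 h)⟩,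
    fun hm _ β β' h => hm.right_cancellation β β' ((comp_sumMap_eq_iff f β β').2 h)⟩

theorem len_le_sum_of_jointlyMono {f : ∀ i, a ⟶ d i} (hf : JointlyMono f) :
    a.len ≤ ∑ i, (d i).len :=
  @len_le_of_mono _ _ (sumMap f) ((jointlyMono_iff_mono_sumMap f).1 hf)

/-- With `sumMap f = e ≫ m` its epi-mono factorization and `s` a section of `e`, the family
`s ≫ f i` is jointly monic because `sumMap (s ≫ f ·) = s ≫ e ≫ m = m`. -/
theorem exists_epi_comp_jointlyMono (f : ∀ i, a ⟶ d i) :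
    ∃ (x : SimplexCategory) (g : a ⟶ x) (h : ∀ i, x ⟶ d i),
      Epi g ∧ JointlyMono h ∧ ∀ i, g ≫ h i = f i := by
  obtain ⟨x, e, m, _, _, hem⟩ : ∃ (x : SimplexCategory) (e : a ⟶ x) (m : x ⟶ _),
      Epi e ∧ Mono m ∧ e ≫ m = sumMap f :=
    ⟨_, _, _, inferInstance, inferInstance, image.fac _⟩
  have := isSplitEpi_of_epi e
  refine ⟨x, e, fun i => section_ e ≫ f i, inferInstance, ?_, fun i => ?_⟩
  · rw [jointlyMono_iff_mono_sumMap, comp_sumMap, ← hem, IsSplitEpi.id_assoc]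
    infer_instance
  · have hes : (e ≫ section_ e) ≫ sumMap f = 𝟙 a ≫ sumMap f := by
      rw [← hem, Category.assoc, IsSplitEpi.id_assoc, Category.id_comp]
    simpa only [Category.assoc, Category.id_comp] using (comp_sumMap_eq_iff f _ _).1 hes i

noncomputable def multiReedyStruct : MultiReedyStruct SimplexCategory where
  minus := MorphismProperty.epimorphisms _
  plusM := @fun _ _ _ _ f => JointlyMono f
  deg := len
  minus_id := MorphismProperty.id_mem _
  minus_comp := MorphismProperty.comp_mem _
  plusM_id _ := (jointlyMono_punit_iff _).2 inferInstance
  plusM_reindex := @fun _ _ _ _ _ e _ _ hf => hf.comp_surjective e.surjective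
  plusM_comp := @fun _ _ _ _ _ _ _ _ _ hf hg => hf.sigma hg
  fact_exists := @fun _ _ _ _ f => exists_epi_comp_jointlyMono f
  fact_unique := @fun _ _ _ _ _ _ g h g' h' _ hh _ hh' w => by
    obtain ⟨φ, _, hgφ, hφh⟩ := exists_isIso_of_epi_comp_jointlyMono g g' hh hh' w
    obtain ⟨rfl, rfl⟩ := exists_eq_eqToHom_of_isIso φ
    exact ⟨rfl, hgφ, hφh⟩
  plusM_deg := @fun _ _ _ _ _ hf => len_le_sum_of_jointlyMono hf
  plusOne_deg_eq := fun f hf hlen =>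
    have := (jointlyMono_punit_iff f).1 hf
    have := (isIso_iff_of_mono f).2 hlen
    exists_eq_eqToHom_of_isIso f
  minus_deg := fun f _ => len_le_of_epi f
  minus_deg_eq := fun f _ hlen =>
    have := (isIso_iff_of_epi f).2 hlen
    exists_eq_eqToHom_of_isIso f

end SimplexCategory

/-- The simplex category `Δ`, with `Δ⁻` the surjections, `Δ⁺(*)` the monomorphic families
(tuples `(αₛ : [m] ⟶ [nₛ])` such that `αₛ ∘ β = αₛ ∘ β'` for all `s` implies `β = β'`),
and `deg [m] = m`, is a multi-Reedy category. -/
theorem simplexCategory_multiReedy :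
    ∃ M : MultiReedyStruct SimplexCategory,
      (∀ x : SimplexCategory, M.deg x = x.len) ∧
      (∀ {a b : SimplexCategory} (f : a ⟶ b),
        M.minus f ↔ Function.Surjective f.toOrderHom) ∧
      (∀ {a : SimplexCategory} {ι : Type} [Fintype ι] (d : ι → SimplexCategory)
        (f : ∀ i, a ⟶ d i),
        M.plusM d f ↔
          ∀ {k : SimplexCategory} (β β' : k ⟶ a), (∀ i, β ≫ f i = β' ≫ f i) → β = β') :=
  ⟨SimplexCategory.multiReedyStruct, fun _ => rfl,
    fun _ => SimplexCategory.epi_iff_surjective, fun _ _ => Iff.rfl⟩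
end

section
/- A Reedy category C is elegant if and only if it satisfies property (SP): every pair of maps σ₁: c → d₁, σ₂: c → d₂ in C⁻ extends to a commutative square τ₁σ₁ = τ₂σ₂ with τₛ: dₛ → e in C⁻ whose image under the Yoneda embedding is a pushout square in Psh(C). -/
open CategoryTheory CategoryTheory.Limits Opposite

universe v u

variable {C : Type} [SmallCategory C]

/-- A `c`-point `x ∈ X(c)` of a presheaf is degenerate if it is the image of some point
under a non-identity map of `C⁻`. -/
def Degenerate (R : ReedyStruct C) (X : Cᵒᵖ ⥤ Type) {c : C} (x : X.obj (op c)) : Prop :=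
  ∃ (d : C) (σ : c ⟶ d) (y : X.obj (op d)),
    R.minus σ ∧ (¬ ∃ w : c = d, σ = eqToHom w) ∧ X.map σ.op y = x

/-- A Reedy category is elegant if every point of every presheaf is uniquely a degeneracy
of a unique non-degenerate point. -/
def Elegant (R : ReedyStruct C) : Prop :=
  ∀ (X : Cᵒᵖ ⥤ Type) (c : C) (x : X.obj (op c)),
    ∃! p : Σ d : C, (c ⟶ d) × X.obj (op d),
      R.minus p.2.1 ∧ ¬ Degenerate R X p.2.2 ∧ X.map p.2.1.op p.2.2 = x

/-- Property (SP): every pair of maps in `C⁻` with common source extends to a commutative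
square in `C⁻` whose image under the Yoneda embedding is a pushout square of presheaves. -/
def StrongPushoutProp (R : ReedyStruct C) : Prop :=
  ∀ {c d₁ d₂ : C} (σ₁ : c ⟶ d₁) (σ₂ : c ⟶ d₂), R.minus σ₁ → R.minus σ₂ →
    ∃ (e : C) (τ₁ : d₁ ⟶ e) (τ₂ : d₂ ⟶ e), R.minus τ₁ ∧ R.minus τ₂ ∧
      σ₁ ≫ τ₁ = σ₂ ≫ τ₂ ∧
      IsPushout (yoneda.map σ₁) (yoneda.map σ₂) (yoneda.map τ₁) (yoneda.map τ₂)

/-!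
In an elegant category, the two canonical points of the pushout presheaf
`P = y(d₁) ⊔_{y(c)} y(d₂)` pull back to the same point of `P(c)`; uniqueness of its non-degenerate
decomposition yields a commuting square `σ₁ ≫ τ₁ = σ₂ ≫ τ₂` in `C⁻` and one non-degenerate
`z ∈ P(e)` restricting to both canonical points. The maps `y(e) → P` given by `z` and
`P → y(e)` given by the square are inverse: one composite is checked on the legs of the pushout,
the other is an endomorphism `ψ` of `e` fixing `z`, which must be `𝟙` because `z` is
non-degenerate and `ψ` factors as a map of `C⁻` followed by one of `C⁺`.

Conversely, under (SP) two non-degenerate decompositions `(σᵢ, yᵢ)` of the same point glue along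
the pushout square to a point `z` with `τᵢ^* z = yᵢ`; non-degeneracy of `yᵢ` forces `τᵢ = 𝟙`.
Existence of decompositions holds in any Reedy category, by induction on the degree.
-/

def IsNondegDecomposition (R : ReedyStruct C) (X : Cᵒᵖ ⥤ Type) {c d : C} (x : X.obj (op c))
    (σ : c ⟶ d) (y : X.obj (op d)) : Prop :=
  R.minus σ ∧ ¬ Degenerate R X y ∧ X.map σ.op y = x

lemma ReedyStruct.deg_lt_of_minus {D : Type u} [Category.{v} D] (R : ReedyStruct D) {c d : D}
    {σ : c ⟶ d} (hσ : R.minus σ) (hne : ¬ ∃ w : c = d, σ = eqToHom w) : R.deg d < R.deg c :=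
  (R.minus_deg σ hσ).lt_of_ne fun h => hne (R.minus_deg_eq σ hσ h.symm)

lemma exists_map_eq_of_isPushout_yoneda {D : Type u} [Category.{v} D] {X : Dᵒᵖ ⥤ Type v}
    {c d₁ d₂ e : D} {σ₁ : c ⟶ d₁} {σ₂ : c ⟶ d₂} {τ₁ : d₁ ⟶ e} {τ₂ : d₂ ⟶ e}
    (h : IsPushout (yoneda.map σ₁) (yoneda.map σ₂) (yoneda.map τ₁) (yoneda.map τ₂))
    {y₁ : X.obj (op d₁)} {y₂ : X.obj (op d₂)} (hy : X.map σ₁.op y₁ = X.map σ₂.op y₂) :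
    ∃ z : X.obj (op e), X.map τ₁.op z = y₁ ∧ X.map τ₂.op z = y₂ := by
  have hw : yoneda.map σ₁ ≫ yonedaEquiv.symm y₁ = yoneda.map σ₂ ≫ yonedaEquiv.symm y₂ := by
    rw [yonedaEquiv_symm_naturality_left, yonedaEquiv_symm_naturality_left, hy]
  refine ⟨yonedaEquiv (h.desc _ _ hw), ?_, ?_⟩
  · rw [yonedaEquiv_naturality, h.inl_desc, Equiv.apply_symm_apply]
  · rw [yonedaEquiv_naturality, h.inr_desc, Equiv.apply_symm_apply]

section Decomposition

variable {R : ReedyStruct C} {X : Cᵒᵖ ⥤ Type}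

lemma exists_eq_eqToHom_of_not_degenerate {d e : C} {τ : d ⟶ e} {y : X.obj (op d)}
    {z : X.obj (op e)} (hy : ¬ Degenerate R X y) (hτ : R.minus τ) (hz : X.map τ.op z = y) :
    ∃ w : d = e, τ = eqToHom w :=
  not_not.mp fun hne => hy ⟨e, τ, z, hτ, hne, hz⟩

lemma eq_id_of_map_eq_of_not_degenerate {e : C} {z : X.obj (op e)} (hz : ¬ Degenerate R X z)
    {ψ : e ⟶ e} (hψ : X.map ψ.op z = z) : ψ = 𝟙 e := by
  obtain ⟨e', g, h, hg, hh, rfl⟩ := R.fact_exists ψ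
  have hgh : X.map g.op (X.map h.op z) = z := by
    rwa [op_comp, Functor.map_comp_apply] at hψ
  obtain ⟨rfl, rfl⟩ := exists_eq_eqToHom_of_not_degenerate hz hg hgh
  obtain ⟨-, rfl⟩ := R.plus_deg_eq h hh rfl
  simp

lemma IsNondegDecomposition.precomp {c d e : C} {y : X.obj (op d)} {τ : d ⟶ e}
    {z : X.obj (op e)} (h : IsNondegDecomposition R X y τ z) {σ : c ⟶ d} (hσ : R.minus σ) :
    IsNondegDecomposition R X (X.map σ.op y) (σ ≫ τ) z :=
  ⟨R.minus_comp σ τ hσ h.1, h.2.1, by rw [op_comp, Functor.map_comp_apply, h.2.2]⟩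

lemma exists_isNondegDecomposition {c : C} (x : X.obj (op c)) :
    ∃ (d : C) (σ : c ⟶ d) (y : X.obj (op d)), IsNondegDecomposition R X x σ y := by
  induction hn : R.deg c using Nat.strong_induction_on generalizing c with
  | _ n ih =>
    by_cases hx : Degenerate R X x
    · obtain ⟨d, σ, y, hσ, hne, rfl⟩ := hx
      obtain ⟨e, τ, z, h⟩ := ih _ (hn ▸ R.deg_lt_of_minus hσ hne) y rfl
      exact ⟨e, σ ≫ τ, z, h.precomp hσ⟩
    · exact ⟨c, 𝟙 c, x, R.minus_id c, hx, by simp⟩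

lemma IsNondegDecomposition.eq_of_strongPushoutProp (hSP : StrongPushoutProp R) {c d₁ d₂ : C}
    {x : X.obj (op c)} {σ₁ : c ⟶ d₁} {σ₂ : c ⟶ d₂} {y₁ : X.obj (op d₁)} {y₂ : X.obj (op d₂)}
    (h₁ : IsNondegDecomposition R X x σ₁ y₁) (h₂ : IsNondegDecomposition R X x σ₂ y₂) :
    (⟨d₁, σ₁, y₁⟩ : Σ d : C, (c ⟶ d) × X.obj (op d)) = ⟨d₂, σ₂, y₂⟩ := by
  obtain ⟨e, τ₁, τ₂, hτ₁, hτ₂, hsq, hpo⟩ := hSP σ₁ σ₂ h₁.1 h₂.1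
  obtain ⟨z, hz₁, hz₂⟩ := exists_map_eq_of_isPushout_yoneda hpo (h₁.2.2.trans h₂.2.2.symm)
  obtain ⟨rfl, rfl⟩ := exists_eq_eqToHom_of_not_degenerate h₁.2.1 hτ₁ hz₁
  obtain ⟨rfl, rfl⟩ := exists_eq_eqToHom_of_not_degenerate h₂.2.1 hτ₂ hz₂
  simp only [eqToHom_refl, Category.comp_id, op_id, Functor.map_id_apply] at hsq hz₁ hz₂
  rw [hsq, ← hz₁, ← hz₂]

lemma Elegant.exists_common_nondegenerate (hEl : Elegant R) {c d₁ d₂ : C} {σ₁ : c ⟶ d₁}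
    {σ₂ : c ⟶ d₂} (hσ₁ : R.minus σ₁) (hσ₂ : R.minus σ₂) {y₁ : X.obj (op d₁)}
    {y₂ : X.obj (op d₂)} (hy : X.map σ₁.op y₁ = X.map σ₂.op y₂) :
    ∃ (e : C) (τ₁ : d₁ ⟶ e) (τ₂ : d₂ ⟶ e) (z : X.obj (op e)), R.minus τ₁ ∧ R.minus τ₂ ∧
      σ₁ ≫ τ₁ = σ₂ ≫ τ₂ ∧ ¬ Degenerate R X z ∧ X.map τ₁.op z = y₁ ∧ X.map τ₂.op z = y₂ := by
  obtain ⟨⟨e₁, τ₁, z₁⟩, h₁ : IsNondegDecomposition R X y₁ τ₁ z₁, -⟩ := hEl X d₁ y₁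
  obtain ⟨⟨e₂, τ₂, z₂⟩, h₂ : IsNondegDecomposition R X y₂ τ₂ z₂, -⟩ := hEl X d₂ y₂
  obtain ⟨_, -, huniq⟩ := hEl X c (X.map σ₁.op y₁)
  have heq := (huniq ⟨e₁, σ₁ ≫ τ₁, z₁⟩ (h₁.precomp hσ₁)).trans
    (huniq ⟨e₂, σ₂ ≫ τ₂, z₂⟩ (hy ▸ h₂.precomp hσ₂)).symm
  obtain ⟨rfl, hpair⟩ := Sigma.mk.inj_iff.mp heq
  obtain ⟨hsq, rfl⟩ := Prod.mk.inj (eq_of_heq hpair)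
  exact ⟨e₁, τ₁, τ₂, z₁, h₁.1, h₂.1, hsq, h₁.2.1, h₁.2.2, h₂.2.2⟩

lemma isPushout_of_not_degenerate {c d₁ d₂ e : C} {σ₁ : c ⟶ d₁} {σ₂ : c ⟶ d₂} {τ₁ : d₁ ⟶ e}
    {τ₂ : d₂ ⟶ e} (hsq : σ₁ ≫ τ₁ = σ₂ ≫ τ₂)
    {z : (pushout (yoneda.map σ₁) (yoneda.map σ₂)).obj (op e)} (hz : ¬ Degenerate R _ z)
    (h₁ : yoneda.map τ₁ ≫ yonedaEquiv.symm z = pushout.inl _ _)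
    (h₂ : yoneda.map τ₂ ≫ yonedaEquiv.symm z = pushout.inr _ _) :
    IsPushout (yoneda.map σ₁) (yoneda.map σ₂) (yoneda.map τ₁) (yoneda.map τ₂) := by
  have hw : yoneda.map σ₁ ≫ yoneda.map τ₁ = yoneda.map σ₂ ≫ yoneda.map τ₂ := by
    rw [← Functor.map_comp, ← Functor.map_comp, hsq]
  set ζ := yonedaEquiv.symm z
  set φ := pushout.desc _ _ hw
  have hφζ : φ ≫ ζ = 𝟙 _ := pushout.hom_ext
    (by rw [pushout.inl_desc_assoc, h₁, Category.comp_id])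
    (by rw [pushout.inr_desc_assoc, h₂, Category.comp_id])
  set ψ : e ⟶ e := yonedaEquiv (ζ ≫ φ)
  have hψ : yoneda.map ψ = ζ ≫ φ := yonedaEquiv.injective (yonedaEquiv_yoneda_map ψ)
  have hψz : (pushout (yoneda.map σ₁) (yoneda.map σ₂)).map ψ.op z = z := by
    rw [← Equiv.apply_symm_apply yonedaEquiv z, yonedaEquiv_naturality, hψ, Category.assoc, hφζ,
      Category.comp_id]
  have hζφ : ζ ≫ φ = 𝟙 _ := by
    rw [← hψ, eq_id_of_map_eq_of_not_degenerate hz hψz, yoneda.map_id]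
  exact IsPushout.of_iso_pushout ⟨hw⟩ ⟨ζ, φ, hζφ, hφζ⟩ h₁ h₂

lemma Elegant.strongPushoutProp (hEl : Elegant R) : StrongPushoutProp R := by
  intro c d₁ d₂ σ₁ σ₂ hσ₁ hσ₂
  have hy : (pushout (yoneda.map σ₁) (yoneda.map σ₂)).map σ₁.op (yonedaEquiv (pushout.inl _ _)) =
      (pushout (yoneda.map σ₁) (yoneda.map σ₂)).map σ₂.op (yonedaEquiv (pushout.inr _ _)) := by
    rw [yonedaEquiv_naturality, yonedaEquiv_naturality, pushout.condition]
  obtain ⟨e, τ₁, τ₂, z, hτ₁, hτ₂, hsq, hz, hz₁, hz₂⟩ :=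
    hEl.exists_common_nondegenerate hσ₁ hσ₂ hy
  refine ⟨e, τ₁, τ₂, hτ₁, hτ₂, hsq, isPushout_of_not_degenerate hsq hz ?_ ?_⟩
  · rw [yonedaEquiv_symm_naturality_left, hz₁, Equiv.symm_apply_apply]
  · rw [yonedaEquiv_symm_naturality_left, hz₂, Equiv.symm_apply_apply]

end Decomposition

/-- A Reedy category is elegant if and only if it satisfies property (SP). -/
theorem elegant_iff_strongPushout (R : ReedyStruct C) :
    Elegant R ↔ StrongPushoutProp R := by
  refine ⟨Elegant.strongPushoutProp, fun hSP X c x => ?_⟩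
  obtain ⟨d, σ, y, h⟩ := exists_isNondegDecomposition (R := R) x
  exact ⟨⟨d, σ, y⟩, h, fun ⟨_, _, _⟩ h' => IsNondegDecomposition.eq_of_strongPushoutProp hSP h' h⟩
end

section
/- In an elegant Reedy category, for every σ: c → d in C⁻ the map Fσ: Fc → Fd is a split epimorphism of presheaves; moreover a morphism α of C lies in C⁻ if and only if Fα is an epimorphism in Psh(C). -/
/-!
For `σ : c ⟶ d` in `C⁻`, let `P` be the pushout of `Fσ` along itself and `s` its swap
automorphism. The point `inl 𝟙` of `P(d)` is a degeneracy `ν^* y` of a non-degenerate `y`, and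
`s y` is non-degenerate as well. Since `σ^* inl 𝟙 = σ^* inr 𝟙`, both `y` and `s y` are the
non-degenerate part of this point along `σ ≫ ν`, so `s y = y` and hence `inl = inr`: `Fσ` is an
epimorphism, and evaluating at `d` yields a section of `σ`. Conversely, if `Fα` is epi then `α`
has a section, so the `C⁺`-part of its Reedy factorization is a split epimorphism in `C⁺`, which
the degree function forces to be an identity.
-/

open CategoryTheory CategoryTheory.Limits Opposite

universe v u

variable {C : Type} [SmallCategory C]

lemma Degenerate.map_app {R : ReedyStruct C} {X Y : Cᵒᵖ ⥤ Type} (φ : X ⟶ Y) {c : C}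
    {x : X.obj (op c)} (hx : Degenerate R X x) : Degenerate R Y (φ.app _ x) := by
  obtain ⟨d, σ, y, hσ, hσ_ne_id, rfl⟩ := hx
  exact ⟨d, σ, φ.app _ y, hσ, hσ_ne_id, (NatTrans.naturality_apply φ σ.op y).symm⟩

lemma not_degenerate_iso_hom_app {R : ReedyStruct C} {X Y : Cᵒᵖ ⥤ Type} (φ : X ≅ Y) {c : C}
    {x : X.obj (op c)} (hx : ¬ Degenerate R X x) : ¬ Degenerate R Y (φ.hom.app _ x) :=
  fun h => hx (by simpa using h.map_app φ.inv)

namespace Elegant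

variable {R : ReedyStruct C}

theorem iso_hom_app_eq_self_of_map_eq (hR : Elegant R) {X : Cᵒᵖ ⥤ Type} (φ : X ≅ X)
    {c d : C} {σ : c ⟶ d} (hσ : R.minus σ) {x : X.obj (op d)}
    (h : X.map σ.op (φ.hom.app _ x) = X.map σ.op x) : φ.hom.app _ x = x := by
  obtain ⟨⟨e, ν, y⟩, ⟨hν, hy, rfl⟩, -⟩ := hR X d x
  have hφ_natural : φ.hom.app _ (X.map ν.op y) = X.map ν.op (φ.hom.app _ y) :=
    NatTrans.naturality_apply _ _ _
  have hy_fixed : φ.hom.app _ y = y := by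
    have huniq := (hR X c (X.map (σ ≫ ν).op y)).unique
      (y₁ := ⟨e, σ ≫ ν, φ.hom.app _ y⟩) (y₂ := ⟨e, σ ≫ ν, y⟩)
      ⟨R.minus_comp σ ν hσ hν, not_degenerate_iso_hom_app φ hy, by simpa [hφ_natural] using h⟩
      ⟨R.minus_comp σ ν hσ hν, hy, rfl⟩
    simpa using huniq
  rw [hφ_natural, hy_fixed]

theorem epi_yoneda_map_of_minus (hR : Elegant R) {c d : C} {σ : c ⟶ d} (hσ : R.minus σ) :
    Epi (yoneda.map σ) := by
  rw [epi_iff_inl_eq_inr (pushoutIsPushout _ _)]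
  apply yonedaEquiv.injective
  have key := hR.iso_hom_app_eq_self_of_map_eq (pushoutSymmetry (yoneda.map σ) (yoneda.map σ)) hσ
    (x := yonedaEquiv (pushout.inl _ _)) ?_
  · rw [← yonedaEquiv_comp, inl_comp_pushoutSymmetry_hom] at key
    exact key.symm
  · rw [← yonedaEquiv_comp, inl_comp_pushoutSymmetry_hom, yonedaEquiv_naturality,
      yonedaEquiv_naturality, pushout.condition]

end Elegant

lemma isSplitEpi_of_epi_yoneda_map {D : Type u} [Category.{v} D] {a b : D} (f : a ⟶ b)
    [Epi (yoneda.map f)] : IsSplitEpi f := by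
  obtain ⟨s, hs⟩ := (epi_iff_surjective ((yoneda.map f).app (op b))).1 inferInstance (𝟙 b)
  exact ⟨⟨⟨s, hs⟩⟩⟩

namespace ReedyStruct

variable {D : Type u} [Category.{v} D] (R : ReedyStruct D)

lemma eq_eqToHom_of_plus_of_comp_eq_id {d e : D} {s : d ⟶ e} {h : e ⟶ d} (hh : R.plus h)
    (hsh : s ≫ h = 𝟙 d) : ∃ w : e = d, h = eqToHom w := by
  obtain ⟨m, a, b, ha, hb, rfl⟩ := R.fact_exists s
  obtain ⟨rfl, -, -⟩ := R.fact_unique a (b ≫ h) (𝟙 d) (𝟙 d) ha (R.plus_comp b h hb hh)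
    (R.minus_id d) (R.plus_id d) (by simpa using hsh)
  exact R.plus_deg_eq h hh (le_antisymm (R.plus_deg h hh) (R.plus_deg b hb))

lemma minus_of_isSplitEpi {a b : D} (f : a ⟶ b) [IsSplitEpi f] : R.minus f := by
  obtain ⟨e, g, h, hg, hh, rfl⟩ := R.fact_exists f
  obtain ⟨rfl, rfl⟩ :=
    R.eq_eqToHom_of_plus_of_comp_eq_id hh (s := section_ (g ≫ h) ≫ g) (by simp)
  simpa using hg

end ReedyStruct

/-- In an elegant Reedy category, for every `σ : c ⟶ d` in `C⁻` the map `Fσ : Fc ⟶ Fd` is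
a split epimorphism of presheaves; moreover a morphism `α` lies in `C⁻` if and only if
`Fα` is an epimorphism in `Psh(C)`. -/
theorem elegant_minus_split_epi (R : ReedyStruct C) (hR : Elegant R) :
    (∀ {c d : C} (σ : c ⟶ d), R.minus σ → IsSplitEpi (yoneda.map σ)) ∧
    (∀ {c d : C} (α : c ⟶ d), R.minus α ↔ Epi (yoneda.map α)) := by
  have split {c d : C} (σ : c ⟶ d) (hσ : R.minus σ) : IsSplitEpi (yoneda.map σ) := by
    have := hR.epi_yoneda_map_of_minus hσ
    have := isSplitEpi_of_epi_yoneda_map σ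
    infer_instance
  refine ⟨split, fun α => ⟨fun hα => ?_, fun _ => ?_⟩⟩
  · have := split α hα
    infer_instance
  · have := isSplitEpi_of_epi_yoneda_map α
    exact R.minus_of_isSplitEpi α
end

section
/- If C is an elegant Reedy category and f: X → Y is a monomorphism of set-valued presheaves on C, then for every object c, X_nd(c) = f⁻¹(Y_nd(c)) as subsets of X(c); in particular f preserves and reflects non-degeneracy of points. -/
open CategoryTheory CategoryTheory.Limits Opposite

universe v u

variable {C : Type} [SmallCategory C]

/-!
A monomorphism always preserves degeneracy. For the converse, the point is that in an elegant
Reedy category every map `σ : c ⟶ d` of `C⁻` is a split epimorphism: the two copies of `𝟙 d` in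
`y d ⊔_{im yσ} y d` are non-degenerate and have the same image under `σ`, so by uniqueness of
the Eilenberg–Zilber decomposition they coincide, which forces `𝟙 d` to factor through `σ`.
With a section `s` of `σ`, a point `f x = σ^* z` has `z = s^* (f x)`, so `x = σ^* (s^* x)` by
injectivity of `f`.
-/

namespace ReedyStruct

variable (R : ReedyStruct C)

lemma exists_eq_eqToHom_of_minus_of_comp_eq_id {d m : C} {μ : d ⟶ m} {z : m ⟶ d}
    (hμ : R.minus μ) (hz : μ ≫ z = 𝟙 d) : ∃ w : d = m, μ = eqToHom w := by
  obtain ⟨k, g, h, hg, hh, rfl⟩ := R.fact_exists z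
  obtain ⟨w, -, -⟩ := R.fact_unique (μ ≫ g) h (𝟙 d) (𝟙 d)
    (R.minus_comp _ _ hμ hg) hh (R.minus_id d) (R.plus_id d) (by simpa using hz)
  subst w
  exact R.minus_deg_eq μ hμ (le_antisymm (R.minus_deg g hg) (R.minus_deg μ hμ))

end ReedyStruct

lemma not_degenerate_of_app_eq_id (R : ReedyStruct C) {X : Cᵒᵖ ⥤ Type} {d : C}
    (π : X ⟶ yoneda.obj d) {x : X.obj (op d)} (hx : π.app (op d) x = 𝟙 d) :
    ¬ Degenerate R X x := by
  rintro ⟨m, μ, y, hμ, hne, rfl⟩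
  have hz : μ ≫ π.app (op m) y = 𝟙 d := by
    rw [← hx, NatTrans.naturality_apply]
    rfl
  exact hne (R.exists_eq_eqToHom_of_minus_of_comp_eq_id hμ hz)

/-- `y d ⊔_{im yσ} y d`: a point is a map `g` to `d` together with a truth value telling the
copy it lies in, which is forced to be `True` when `g` factors through `σ`. -/
def doubledRepresentable {c d : C} (σ : c ⟶ d) : Cᵒᵖ ⥤ Type where
  obj a := {p : (unop a ⟶ d) × Prop // (∃ h, h ≫ σ = p.1) → p.2}
  map φ := TypeCat.ofHom fun p =>
    ⟨(φ.unop ≫ p.1.1, p.1.2 ∨ ∃ h, h ≫ σ = φ.unop ≫ p.1.1), Or.inr⟩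
  map_id a := by
    ext ⟨⟨g, P⟩, hP⟩
    · exact Category.id_comp g
    · refine or_iff_left_of_imp ?_
      rintro ⟨h, hh⟩
      exact hP ⟨h, by simpa using hh⟩
  map_comp φ ψ := by
    ext ⟨⟨g, P⟩, -⟩
    · exact Category.assoc _ _ _
    · change (P ∨ ∃ h, h ≫ σ = (ψ.unop ≫ φ.unop) ≫ g) ↔
        (P ∨ ∃ h, h ≫ σ = φ.unop ≫ g) ∨ ∃ h, h ≫ σ = ψ.unop ≫ φ.unop ≫ g
      rw [Category.assoc, or_assoc]
      refine or_congr_right (or_iff_right_of_imp ?_).symm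
      rintro ⟨h, hh⟩
      exact ⟨ψ.unop ≫ h, by rw [Category.assoc, hh]⟩

def doubledRepresentable.fst {c d : C} (σ : c ⟶ d) : doubledRepresentable σ ⟶ yoneda.obj d where
  app _ := TypeCat.ofHom fun p => p.1.1

lemma Elegant.isSplitEpi_of_minus {R : ReedyStruct C} (hR : Elegant R) {c d : C} {σ : c ⟶ d}
    (hσ : R.minus σ) : IsSplitEpi σ := by
  let W := doubledRepresentable σ
  let u (P : Prop) (hP : (∃ h, h ≫ σ = 𝟙 d) → P) : Σ e : C, (c ⟶ e) × W.obj (op e) :=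
    ⟨d, σ, ⟨(𝟙 d, P), hP⟩⟩
  have hu (P : Prop) (hP : (∃ h, h ≫ σ = 𝟙 d) → P) :
      R.minus (u P hP).2.1 ∧ ¬ Degenerate R W (u P hP).2.2 ∧
        W.map (u P hP).2.1.op (u P hP).2.2 = ⟨(σ, True), fun _ => trivial⟩ :=
    ⟨hσ, not_degenerate_of_app_eq_id R (doubledRepresentable.fst σ) rfl,
      Subtype.ext (Prod.ext (Category.comp_id σ) (eq_true (Or.inr ⟨𝟙 c, by simp [u]⟩)))⟩
  -- The second copy of `𝟙 d` is labelled by the claim itself, so identifying it with the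
  -- `True` copy proves the claim.
  obtain ⟨-, hcopies⟩ := Sigma.mk.inj_iff.mp
    ((hR W c _).unique (hu True fun _ => trivial) (hu (∃ h, h ≫ σ = 𝟙 d) id))
  have hsplit : True = ∃ h, h ≫ σ = 𝟙 d := congrArg (fun p => p.2.1.2) (eq_of_heq hcopies)
  obtain ⟨s, hs⟩ := hsplit ▸ trivial
  exact IsSplitEpi.mk' ⟨s, hs⟩

section

variable {R : ReedyStruct C} {X Y : Cᵒᵖ ⥤ Type} {c : C} {x : X.obj (op c)}

lemma Degenerate.app (f : X ⟶ Y) (hx : Degenerate R X x) : Degenerate R Y (f.app (op c) x) := by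
  obtain ⟨m, μ, y, hμ, hne, rfl⟩ := hx
  exact ⟨m, μ, f.app (op m) y, hμ, hne, (NatTrans.naturality_apply f μ.op y).symm⟩

lemma Degenerate.of_app (hR : Elegant R) (f : X ⟶ Y) [Mono f]
    (hfx : Degenerate R Y (f.app (op c) x)) : Degenerate R X x := by
  obtain ⟨m, μ, z, hμ, hne, hz⟩ := hfx
  have := hR.isSplitEpi_of_minus hμ
  have hsz : Y.map (section_ μ).op (f.app (op c) x) = z := by
    rw [← hz, ← Functor.map_comp_apply, ← op_comp, IsSplitEpi.id, op_id,
      Functor.map_id_apply]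
  refine ⟨m, μ, X.map (section_ μ).op x, hμ, hne, (mono_iff_injective (f.app (op c))).mp
    inferInstance ?_⟩
  rw [NatTrans.naturality_apply, NatTrans.naturality_apply, hsz, hz]

lemma degenerate_app_iff (hR : Elegant R) (f : X ⟶ Y) [Mono f] :
    Degenerate R Y (f.app (op c) x) ↔ Degenerate R X x :=
  ⟨.of_app hR f, .app f⟩

end

/-- If `C` is an elegant Reedy category and `f : X ⟶ Y` a monomorphism of set-valued
presheaves on `C`, then `f` preserves and reflects non-degeneracy of points:
`X_nd(c) = f⁻¹(Y_nd(c))`. -/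
theorem elegant_mono_nondegenerate (R : ReedyStruct C) (hR : Elegant R)
    {X Y : Cᵒᵖ ⥤ Type} (f : X ⟶ Y) (hf : Mono f) (c : C) (x : X.obj (op c)) :
    ¬ Degenerate R X x ↔ ¬ Degenerate R Y (f.app (op c) x) :=
  (degenerate_app_iff hR f).not.symm
end
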